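/- Let f̃ : ℝ^b → ℝ^b be an A-equivariant lift, let μ ∈ ℝ with |μ| > 1, and let v ∈ ℝ^b be a nonzero vector with Aᵀ v = μ v (equivalently ⟨v, A w⟩ = μ ⟨v, w⟩ for all w). Then for every x̃ ∈ ℝ^b the limit β_μ(x̃) = lim_{n→∞} μ^{−n} ⟨v, f̃^n(x̃)⟩ exists; the function β_μ : ℝ^b → ℝ is continuous, satisfies β_μ ∘ f̃ = μ β_μ and β_μ(x̃ + n) = β_μ(x̃) + ⟨v, n⟩ for all n ∈ ℤ^b, and differs from x̃ ↦ ⟨v, x̃⟩ by a bounded function. Moreover β_μ is the unique continuous function g : ℝ^b → ℝ with g ∘ f̃ = μ g such that g(x̃) − ⟨v, x̃⟩ is bounded. -/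

import Mathlib

/-!
Write `φ x = ⟨v, x⟩` and `r = φ ∘ f̃ - μ φ`. Equivariance and `Aᵀ v = μ v` make `r` periodic,
hence bounded, and telescoping gives `μ⁻ⁿ φ(f̃ⁿ x) = φ x + ∑_{k<n} μ^{-(k+1)} r(f̃ᵏ x)`. Since
`|μ| > 1` the series converges uniformly, which yields existence, continuity and the bounded
distance to `φ`. Two solutions of `g ∘ f̃ = μ g` at bounded distance coincide, because their
difference `d` satisfies `|d x| = |μ|⁻ⁿ |d (f̃ⁿ x)|`.
-/

open Matrix Filter

/-- The coercion of an integer vector to a real vector. -/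
noncomputable def intVec {b : ℕ} (n : Fin b → ℤ) : Fin b → ℝ := fun i => (n i : ℝ)

/-- The integer lattice `ℤ^b` as an additive subgroup of `ℝ^b`. -/
def latticeZ (b : ℕ) : AddSubgroup (Fin b → ℝ) where
  carrier := Set.range (fun n : Fin b → ℤ => intVec n)
  add_mem' := by rintro _ _ ⟨m, rfl⟩ ⟨n, rfl⟩; exact ⟨m + n, by funext i; simp [intVec]⟩
  zero_mem' := ⟨0, by funext i; simp [intVec]⟩
  neg_mem' := by rintro _ ⟨n, rfl⟩; exact ⟨-n, by funext i; simp [intVec]⟩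

/-- The torus `𝕋^b = ℝ^b / ℤ^b`. -/
abbrev Torus (b : ℕ) := (Fin b → ℝ) ⧸ latticeZ b

/-- The projection `π : ℝ^b → 𝕋^b`. -/
noncomputable def projT (b : ℕ) : (Fin b → ℝ) →+ Torus b := QuotientAddGroup.mk' (latticeZ b)

/-- The real matrix associated to an integer matrix. -/
noncomputable def realMat {b : ℕ} (A : Matrix (Fin b) (Fin b) ℤ) : Matrix (Fin b) (Fin b) ℝ :=
  A.map (Int.cast)

open Topology

section EigenLimit

variable {X : Type*} (f : X → X) (φ : X → ℝ) (μ : ℝ)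

def eigenDefect (x : X) : ℝ := φ (f x) - μ * φ x

-- The limit of `φ (f^[n] x) / μ ^ n`, summed by telescoping (`div_pow_iterate_eq_add_sum`).
noncomputable def eigenLimit (x : X) : ℝ :=
  φ x + ∑' k, eigenDefect f φ μ (f^[k] x) / μ ^ (k + 1)

variable {f φ μ}

theorem continuous_eigenDefect [TopologicalSpace X] (hf : Continuous f) (hφ : Continuous φ) :
    Continuous (eigenDefect f φ μ) :=
  (hφ.comp hf).sub (continuous_const.mul hφ)

theorem div_pow_iterate_eq_add_sum (hμ : μ ≠ 0) (x : X) (n : ℕ) :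
    φ (f^[n] x) / μ ^ n =
      φ x + ∑ k ∈ Finset.range n, eigenDefect f φ μ (f^[k] x) / μ ^ (k + 1) := by
  induction n with
  | zero => simp
  | succ n ih =>
    rw [Function.iterate_succ_apply', Finset.sum_range_succ, ← add_assoc, ← ih, eigenDefect]
    field_simp
    ring

theorem summable_geometric_inv_abs (M : ℝ) (hμ : 1 < |μ|) :
    Summable fun k : ℕ => M * |μ|⁻¹ ^ (k + 1) :=
  ((summable_geometric_of_lt_one (by positivity) (inv_lt_one_of_one_lt₀ hμ)).mul_left
    (M * |μ|⁻¹)).congr fun k => by ring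

variable {M : ℝ} (hM : ∀ x, |eigenDefect f φ μ x| ≤ M)
include hM

theorem norm_eigenDefect_iterate_div_le (x : X) (k : ℕ) :
    ‖eigenDefect f φ μ (f^[k] x) / μ ^ (k + 1)‖ ≤ M * |μ|⁻¹ ^ (k + 1) := by
  rw [Real.norm_eq_abs, abs_div, abs_pow, inv_pow, ← div_eq_mul_inv]
  gcongr
  exact hM _

theorem tendsto_div_pow_eigenLimit (hμ : 1 < |μ|) (x : X) :
    Tendsto (fun n : ℕ => φ (f^[n] x) / μ ^ n) atTop (𝓝 (eigenLimit f φ μ x)) := by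
  have hsum := (summable_geometric_inv_abs M hμ).of_norm_bounded
    (norm_eigenDefect_iterate_div_le hM x)
  refine (tendsto_const_nhds.add hsum.hasSum.tendsto_sum_nat).congr fun n => ?_
  exact (div_pow_iterate_eq_add_sum (abs_pos.mp (one_pos.trans hμ)) x n).symm

theorem continuous_eigenLimit [TopologicalSpace X] (hf : Continuous f) (hφ : Continuous φ)
    (hμ : 1 < |μ|) : Continuous (eigenLimit f φ μ) := by
  refine hφ.add (continuous_tsum (fun k => ?_) (summable_geometric_inv_abs M hμ)
    fun k x => norm_eigenDefect_iterate_div_le hM x k)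
  exact ((continuous_eigenDefect hf hφ).comp (hf.iterate k)).div_const _

theorem exists_abs_eigenLimit_sub_le (hμ : 1 < |μ|) :
    ∃ C, ∀ x, |eigenLimit f φ μ x - φ x| ≤ C := by
  refine ⟨∑' k : ℕ, M * |μ|⁻¹ ^ (k + 1), fun x => ?_⟩
  rw [eigenLimit, add_sub_cancel_left, ← Real.norm_eq_abs]
  exact tsum_of_norm_bounded (summable_geometric_inv_abs M hμ).hasSum
    (norm_eigenDefect_iterate_div_le hM x)

theorem eigenLimit_eq_add_of_iterate (hμ : 1 < |μ|) {x y : X} {c : ℝ}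
    (h : ∀ n, φ (f^[n] y) = φ (f^[n] x) + μ ^ n * c) :
    eigenLimit f φ μ y = eigenLimit f φ μ x + c := by
  refine tendsto_nhds_unique (tendsto_div_pow_eigenLimit hM hμ y) ?_
  refine ((tendsto_div_pow_eigenLimit hM hμ x).add_const c).congr fun n => ?_
  have : μ ^ n ≠ 0 := pow_ne_zero n (abs_pos.mp (one_pos.trans hμ))
  rw [h, add_div, mul_div_cancel_left₀ _ this]

end EigenLimit

section FunctionalEquation

variable {X : Type*} {f : X → X} {μ : ℝ}

theorem apply_eq_mul_of_tendsto_div_pow {φ L : X → ℝ} (hμ : μ ≠ 0)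
    (hL : ∀ x, Tendsto (fun n : ℕ => φ (f^[n] x) / μ ^ n) atTop (𝓝 (L x))) (x : X) :
    L (f x) = μ * L x := by
  refine tendsto_nhds_unique (hL (f x)) ?_
  refine (((hL x).comp (tendsto_add_atTop_nat 1)).const_mul μ).congr fun n => ?_
  simp only [Function.comp_apply, ← Function.iterate_succ_apply, pow_succ]
  field_simp

theorem eq_of_abs_sub_le_of_apply_eq_mul (hμ : 1 < |μ|) {g g' : X → ℝ}
    (hg : ∀ x, g (f x) = μ * g x) (hg' : ∀ x, g' (f x) = μ * g' x) {C : ℝ}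
    (hC : ∀ x, |g x - g' x| ≤ C) : g = g' := by
  have hiter : ∀ n x, g (f^[n] x) - g' (f^[n] x) = μ ^ n * (g x - g' x) := by
    intro n
    induction n with
    | zero => simp
    | succ n ih =>
      intro x
      rw [Function.iterate_succ_apply, ih, hg, hg', pow_succ]
      ring
  funext x
  by_contra hne
  have hpos : 0 < |g x - g' x| := abs_pos.mpr (sub_ne_zero.mpr hne)
  obtain ⟨n, hn⟩ := pow_unbounded_of_one_lt (C / |g x - g' x|) hμ
  have := hC (f^[n] x)
  rw [hiter, abs_mul, abs_pow] at this
  rw [div_lt_iff₀ hpos] at hn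
  linarith

end FunctionalEquation

section Lattice

variable {b : ℕ}

theorem realMat_mulVec_intVec (A : Matrix (Fin b) (Fin b) ℤ) (m : Fin b → ℤ) :
    realMat A *ᵥ intVec m = intVec (A *ᵥ m) := by
  funext i
  simp [Matrix.mulVec, dotProduct, realMat, intVec]

theorem dotProduct_mulVec_of_transpose_mulVec_eq {B : Matrix (Fin b) (Fin b) ℝ} {μ : ℝ}
    {v : Fin b → ℝ} (heig : Bᵀ *ᵥ v = μ • v) (w : Fin b → ℝ) :
    v ⬝ᵥ B *ᵥ w = μ * (v ⬝ᵥ w) := by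
  rw [dotProduct_mulVec, ← mulVec_transpose, heig, smul_dotProduct, smul_eq_mul]

theorem exists_abs_le_of_continuous_of_periodic {h : (Fin b → ℝ) → ℝ} (hc : Continuous h)
    (hper : ∀ x m, h (x + intVec m) = h x) : ∃ M, ∀ x, |h x| ≤ M := by
  obtain ⟨M, hM⟩ := (isCompact_Icc (a := (0 : Fin b → ℝ)) (b := 1)).exists_bound_of_continuousOn
    hc.continuousOn
  refine ⟨M, fun x => ?_⟩
  have hx : x - intVec (fun i => ⌊x i⌋) ∈ Set.Icc (0 : Fin b → ℝ) 1 :=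
    ⟨fun i => by simp [intVec, Int.fract_nonneg],
      fun i => by simp [intVec, (Int.fract_lt_one _).le]⟩
  have := hM _ hx
  rwa [← hper _ (fun i => ⌊x i⌋), sub_add_cancel, Real.norm_eq_abs] at this

variable {A : Matrix (Fin b) (Fin b) ℤ} {f : (Fin b → ℝ) → (Fin b → ℝ)} {μ : ℝ} {v : Fin b → ℝ}
  (hequiv : ∀ x n, f (x + intVec n) = f x + realMat A *ᵥ intVec n)
  (heig : (realMat A)ᵀ *ᵥ v = μ • v)
include hequiv heig

theorem eigenDefect_dotProduct_add_intVec (x : Fin b → ℝ) (m : Fin b → ℤ) :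
    eigenDefect f (v ⬝ᵥ ·) μ (x + intVec m) = eigenDefect f (v ⬝ᵥ ·) μ x := by
  simp only [eigenDefect, hequiv, dotProduct_add, dotProduct_mulVec_of_transpose_mulVec_eq heig]
  ring

theorem dotProduct_iterate_add_intVec (n : ℕ) (x : Fin b → ℝ) (m : Fin b → ℤ) :
    v ⬝ᵥ f^[n] (x + intVec m) = v ⬝ᵥ f^[n] x + μ ^ n * (v ⬝ᵥ intVec m) := by
  induction n generalizing x m with
  | zero => simp
  | succ n ih =>
    rw [Function.iterate_succ_apply, Function.iterate_succ_apply, hequiv,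
      realMat_mulVec_intVec, ih, ← realMat_mulVec_intVec,
      dotProduct_mulVec_of_transpose_mulVec_eq heig, pow_succ]
    ring

end Lattice

theorem stmt15_general (b : ℕ) (A : Matrix (Fin b) (Fin b) ℤ)
    (f : (Fin b → ℝ) → (Fin b → ℝ)) (hcont : Continuous f)
    (hequiv : ∀ (x : Fin b → ℝ) (n : Fin b → ℤ),
      f (x + intVec n) = f x + (realMat A).mulVec (intVec n))
    (μ : ℝ) (hμ : 1 < |μ|) (v : Fin b → ℝ)
    (heig : (realMat A)ᵀ.mulVec v = μ • v) :
    ∃ g : (Fin b → ℝ) → ℝ,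
      (∀ x : Fin b → ℝ,
        Tendsto (fun n : ℕ => (v ⬝ᵥ f^[n] x) / μ ^ n) atTop (nhds (g x))) ∧
      Continuous g ∧
      (∀ x : Fin b → ℝ, g (f x) = μ * g x) ∧
      (∀ (x : Fin b → ℝ) (n : Fin b → ℤ), g (x + intVec n) = g x + v ⬝ᵥ intVec n) ∧
      (∃ C : ℝ, ∀ x : Fin b → ℝ, |g x - v ⬝ᵥ x| ≤ C) ∧
      (∀ g' : (Fin b → ℝ) → ℝ, Continuous g' → (∀ x, g' (f x) = μ * g' x) →
        (∃ C' : ℝ, ∀ x : Fin b → ℝ, |g' x - v ⬝ᵥ x| ≤ C') → g' = g) := by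
  set φ : (Fin b → ℝ) → ℝ := (v ⬝ᵥ ·)
  have hφ : Continuous φ := continuous_const.dotProduct continuous_id
  have hμ0 : μ ≠ 0 := abs_pos.mp (one_pos.trans hμ)
  obtain ⟨M, hM⟩ := exists_abs_le_of_continuous_of_periodic
    (continuous_eigenDefect hcont hφ)
    (eigenDefect_dotProduct_add_intVec hequiv heig)
  have hlim := tendsto_div_pow_eigenLimit hM hμ
  have hfeq := apply_eq_mul_of_tendsto_div_pow hμ0 hlim
  obtain ⟨C, hC⟩ := exists_abs_eigenLimit_sub_le hM hμ
  refine ⟨eigenLimit f φ μ, hlim, continuous_eigenLimit hM hcont hφ hμ, hfeq,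
    fun x m => eigenLimit_eq_add_of_iterate hM hμ (dotProduct_iterate_add_intVec hequiv heig · x m),
    ⟨C, hC⟩, ?_⟩
  rintro g' - hg'f ⟨C', hC'⟩
  refine eq_of_abs_sub_le_of_apply_eq_mul hμ hg'f hfeq (C := C' + C) fun x => ?_
  calc |g' x - eigenLimit f φ μ x| = |(g' x - φ x) - (eigenLimit f φ μ x - φ x)| := by
        congr 1; ring
    _ ≤ |g' x - φ x| + |eigenLimit f φ μ x - φ x| := abs_sub _ _
    _ ≤ C' + C := add_le_add (hC' x) (hC x)

/-- For a real eigenvalue `μ` of `Aᵀ` with `|μ| > 1` and eigenvector `v`, the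
limit `β_μ(x̃) = lim μ^{−n} ⟨v, f̃^n(x̃)⟩` exists; `β_μ` is continuous, satisfies
`β_μ ∘ f̃ = μ β_μ` and `β_μ(x̃ + n) = β_μ(x̃) + ⟨v, n⟩`, differs from `x̃ ↦ ⟨v, x̃⟩` by a
bounded function, and is the unique continuous function with these last two properties. -/
theorem stmt15 (b : ℕ) (hb : 1 ≤ b) (A : Matrix (Fin b) (Fin b) ℤ)
    (f : (Fin b → ℝ) → (Fin b → ℝ)) (hcont : Continuous f)
    (hequiv : ∀ (x : Fin b → ℝ) (n : Fin b → ℤ),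
      f (x + intVec n) = f x + (realMat A).mulVec (intVec n))
    (μ : ℝ) (hμ : 1 < |μ|) (v : Fin b → ℝ) (hv : v ≠ 0)
    (heig : (realMat A)ᵀ.mulVec v = μ • v) :
    ∃ g : (Fin b → ℝ) → ℝ,
      (∀ x : Fin b → ℝ,
        Tendsto (fun n : ℕ => (v ⬝ᵥ f^[n] x) / μ ^ n) atTop (nhds (g x))) ∧
      Continuous g ∧
      (∀ x : Fin b → ℝ, g (f x) = μ * g x) ∧
      (∀ (x : Fin b → ℝ) (n : Fin b → ℤ), g (x + intVec n) = g x + v ⬝ᵥ intVec n) ∧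
      (∃ C : ℝ, ∀ x : Fin b → ℝ, |g x - v ⬝ᵥ x| ≤ C) ∧
      (∀ g' : (Fin b → ℝ) → ℝ, Continuous g' → (∀ x, g' (f x) = μ * g' x) →
        (∃ C' : ℝ, ∀ x : Fin b → ℝ, |g' x - v ⬝ᵥ x| ≤ C') → g' = g) :=
  stmt15_general b A f hcont hequiv μ hμ v heig
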